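/- arXiv:1609.08645 — 4 statements merged into one kernel-verified Lean document; each statement's English description precedes it below -/
import Mathlib

section
/- Let G be a claw-free graph with a vertex v whose neighborhood does not induce a clique in the square of G \ v. Then the neighborhood of v in G can be covered by two cliques of G. -/
open SimpleGraph Finset

variable {V : Type*}

/-- A graph is claw-free if it has no induced `K_{1,3}`. -/
def ClawFree (G : SimpleGraph V) : Prop :=
  ∀ v a b c : V, G.Adj v a → G.Adj v b → G.Adj v c →
    a ≠ b → a ≠ c → b ≠ c → G.Adj a b ∨ G.Adj a c ∨ G.Adj b c

/-- The square of a graph: join distinct vertices at distance at most 2. -/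
def square (G : SimpleGraph V) : SimpleGraph V where
  Adj u w := u ≠ w ∧ (G.Adj u w ∨ ∃ x, G.Adj u x ∧ G.Adj x w)
  symm := ⟨by
    rintro u w ⟨h1, h2⟩
    refine ⟨h1.symm, ?_⟩
    rcases h2 with h | ⟨x, hx1, hx2⟩
    · exact Or.inl h.symm
    · exact Or.inr ⟨x, hx2.symm, hx1.symm⟩⟩
  loopless := ⟨fun u h => h.1 rfl⟩

/-- The second neighbourhood of `v` : vertices at distance exactly two from `v`. -/
def secondNbhd (G : SimpleGraph V) (v : V) : Set V :=
  {w | w ≠ v ∧ ¬G.Adj v w ∧ ∃ x, G.Adj v x ∧ G.Adj x w}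

/-- The square degree of a vertex. -/
noncomputable def sqDeg (G : SimpleGraph V) (v : V) : ℕ :=
  ((square G).neighborSet v).ncard

/-! In a claw-free graph, the neighbours of `v` outside the closed neighbourhood of a fixed
neighbour `y` are pairwise adjacent. For nonadjacent `x, y ∈ N(v)` whose only common neighbour
is `v`, no vertex of `N(v)` lies in both closed neighbourhoods `N[x]` and `N[y]`, so the two
cliques `N(v) \ N[y]` and `N(v) \ N[x]` cover `N(v)`. -/

theorem ClawFree.isClique_neighborSet_diff {G : SimpleGraph V} (hG : ClawFree G) {v y : V}
    (hy : G.Adj v y) : G.IsClique (G.neighborSet v \ insert y (G.neighborSet y)) := by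
  rintro z ⟨hz, hzy⟩ w ⟨hw, hwy⟩ hzw
  simp only [Set.mem_insert_iff, mem_neighborSet, not_or] at hzy hwy
  rcases hG v z w y hz hw hy hzw hzy.1 hwy.1 with h | h | h
  · exact h
  · exact absurd h.symm hzy.2
  · exact absurd h.symm hwy.2

theorem stmt_3 (G : SimpleGraph V) (hG : ClawFree G) (v : V)
    (h : ∃ x ∈ G.neighborSet v, ∃ y ∈ G.neighborSet v, x ≠ y ∧ ¬G.Adj x y ∧
      ∀ w, w ≠ v → ¬(G.Adj x w ∧ G.Adj w y)) :
    ∃ C₁ C₂ : Set V, G.IsClique C₁ ∧ G.IsClique C₂ ∧ G.neighborSet v ⊆ C₁ ∪ C₂ := by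
  obtain ⟨x, hx, y, hy, hxy, hnxy, hcommon⟩ := h
  refine ⟨_, _, hG.isClique_neighborSet_diff hy, hG.isClique_neighborSet_diff hx, ?_⟩
  intro z hz
  by_contra hcover
  have hzy : z = y ∨ G.Adj y z := by_contra fun h ↦ hcover (Or.inl ⟨hz, h⟩)
  have hzx : z = x ∨ G.Adj x z := by_contra fun h ↦ hcover (Or.inr ⟨hz, h⟩)
  rcases hzx with rfl | hxz <;> rcases hzy with rfl | hyz
  · exact hxy rfl
  · exact hnxy hyz.symm
  · exact hnxy hxz
  · exact hcommon z (G.ne_of_adj hz).symm ⟨hxz, hyz.symm⟩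
end

section
/- Let G be a connected graph and let C and C' be cliques of G that are both homogeneous sets and are maximal with respect to inclusion among cliques that are homogeneous sets. Then C and C' are either disjoint or equal. -/
open SimpleGraph Finset

variable {V : Type*}

/-- A homogeneous set: every outside vertex is complete or anticomplete to it. -/
def IsHomogeneous (G : SimpleGraph V) (S : Set V) : Prop :=
  ∀ u ∉ S, (∀ s ∈ S, G.Adj u s) ∨ (∀ s ∈ S, ¬G.Adj u s)

/-! If two maximal homogeneous cliques `C` and `C'` share a vertex `x`, then every vertex of
`C' \ C` is adjacent to `x`, hence to all of `C`, so `C ∪ C'` is again a clique. An outside vertex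
sees `x` either in both sets or in neither, so `C ∪ C'` is again homogeneous. Maximality then gives
`C = C ∪ C' = C'`. -/

namespace IsHomogeneous

variable {G : SimpleGraph V} {S T : Set V}

theorem forall_adj_of_adj (hS : IsHomogeneous G S) {u x : V} (hu : u ∉ S) (hx : x ∈ S)
    (hux : G.Adj u x) : ∀ s ∈ S, G.Adj u s :=
  (hS u hu).resolve_right fun h => h x hx hux

theorem union (hS : IsHomogeneous G S) (hT : IsHomogeneous G T) (hST : (S ∩ T).Nonempty) :
    IsHomogeneous G (S ∪ T) := by
  obtain ⟨x, hxS, hxT⟩ := hST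
  intro u hu
  rw [Set.mem_union, not_or] at hu
  rcases hS u hu.1 with hS' | hS' <;> rcases hT u hu.2 with hT' | hT'
  · exact Or.inl fun s hs => hs.elim (hS' s) (hT' s)
  · exact absurd (hS' x hxS) (hT' x hxT)
  · exact absurd (hT' x hxT) (hS' x hxS)
  · exact Or.inr fun s hs => hs.elim (hS' s) (hT' s)

end IsHomogeneous

theorem SimpleGraph.IsClique.union_of_isHomogeneous {G : SimpleGraph V} {S T : Set V}
    (hS : G.IsClique S) (hT : G.IsClique T) (hSh : IsHomogeneous G S)
    (hST : (S ∩ T).Nonempty) : G.IsClique (S ∪ T) := by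
  obtain ⟨x, hxS, hxT⟩ := hST
  have := G.symm
  refine Set.pairwise_union_of_symm.2 ⟨hS, hT, fun a ha b hb hab => ?_⟩
  by_cases hbS : b ∈ S
  · exact hS ha hbS hab
  · have hbx : G.Adj b x := hT hb hxT fun h => hbS (h ▸ hxS)
    exact (hSh.forall_adj_of_adj hbS hxS hbx a ha).symm

theorem stmt_7_general (G : SimpleGraph V) (C C' : Set V)
    (hC : G.IsClique C) (hC' : G.IsClique C')
    (hHC : IsHomogeneous G C) (hHC' : IsHomogeneous G C')
    (hmaxC : ∀ D : Set V, G.IsClique D → IsHomogeneous G D → C ⊆ D → C = D)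
    (hmaxC' : ∀ D : Set V, G.IsClique D → IsHomogeneous G D → C' ⊆ D → C' = D) :
    Disjoint C C' ∨ C = C' := by
  refine or_iff_not_imp_left.2 fun hCC' => ?_
  have hmeet : (C ∩ C').Nonempty := Set.not_disjoint_iff_nonempty_inter.1 hCC'
  have hclique := hC.union_of_isHomogeneous hC' hHC hmeet
  have hhom := hHC.union hHC' hmeet
  exact (hmaxC _ hclique hhom Set.subset_union_left).trans
    (hmaxC' _ hclique hhom Set.subset_union_right).symm

theorem stmt_7 (G : SimpleGraph V) (hconn : G.Connected) (C C' : Set V)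
    (hC : G.IsClique C) (hC' : G.IsClique C')
    (hHC : IsHomogeneous G C) (hHC' : IsHomogeneous G C')
    (hmaxC : ∀ D : Set V, G.IsClique D → IsHomogeneous G D → C ⊆ D → C = D)
    (hmaxC' : ∀ D : Set V, G.IsClique D → IsHomogeneous G D → C' ⊆ D → C' = D) :
    Disjoint C C' ∨ C = C' :=
  stmt_7_general G C C' hC hC' hHC hHC' hmaxC hmaxC'
end

section
/- For any vertex v of a circular interval graph G, the degree of v in the square of G satisfies deg_{G²}(v) ≤ 4ω(G) − 4, where ω(G) is the clique number. -/
/-!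
Fix `v` and measure positions by counterclockwise distance from `v`. Two points of a common arc,
which is shorter than the circle, are joined inside it by the counterclockwise arc from one of
them to the other. A path `v - x - u` whose two edges run in opposite directions already forces
`v ~ u`, because of three points on the circle one lies on the arc from another to the third. So
the square neighbourhood of `v` is covered by the neighbours reached counterclockwise, the second
neighbours reached by two counterclockwise steps, and the same two sets for the reflected
representation `x ↦ -x`.

The first set together with `v` is a clique, all of it lying on the arc from `v` to its farthest
point. The second set together with that farthest neighbour `x₀` is a clique too: every second
neighbour lies beyond `x₀`, and the arc carrying the last step to the farther of two second
neighbours also covers the nearer one. Each of the four sets therefore has at most `ω - 1` elements.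
-/

open SimpleGraph Finset

variable {V : Type*}

instance : Fact ((0 : ℝ) < 1) := ⟨one_pos⟩

local notation "𝕋" => AddCircle (1 : ℝ)

noncomputable def ccwDist (p q : 𝕋) : ℝ := (AddCircle.equivIco 1 0 (q - p) : ℝ)

theorem ccwDist_mem_Ico (p q : 𝕋) : ccwDist p q ∈ Set.Ico 0 1 := by
  have h := (AddCircle.equivIco 1 0 (q - p)).2
  exact ⟨h.1, h.2.trans_eq (zero_add 1)⟩

theorem coe_ccwDist (p q : 𝕋) : (ccwDist p q : 𝕋) = q - p :=
  (AddCircle.equivIco 1 0).symm_apply_apply (q - p)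

theorem ccwDist_eq_of_coe_eq {p q : 𝕋} {x : ℝ} (hx : x ∈ Set.Ico 0 1) (h : (x : 𝕋) = q - p) :
    ccwDist p q = x := by
  rw [← coe_ccwDist] at h
  exact (AddCircle.coe_eq_coe_iff_of_mem_Ico (a := 0) (by simpa using ccwDist_mem_Ico p q)
    (by simpa using hx)).1 h.symm

theorem ccwDist_self (p : 𝕋) : ccwDist p p = 0 :=
  ccwDist_eq_of_coe_eq (by simp) (by simp)

theorem ccwDist_self_le (p q : 𝕋) : ccwDist p p ≤ ccwDist p q :=
  (ccwDist_self p).symm ▸ (ccwDist_mem_Ico p q).1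

theorem ccwDist_eq_sub_of_le {p q r : 𝕋} (h : ccwDist p q ≤ ccwDist p r) :
    ccwDist q r = ccwDist p r - ccwDist p q := by
  obtain ⟨hq, -⟩ := ccwDist_mem_Ico p q
  obtain ⟨-, hr⟩ := ccwDist_mem_Ico p r
  refine ccwDist_eq_of_coe_eq ⟨by linarith, by linarith⟩ ?_
  rw [AddCircle.coe_sub, coe_ccwDist, coe_ccwDist]
  abel

theorem ccwDist_le_ccwDist_of_le_of_le {p q r s : 𝕋} (hqr : ccwDist p q ≤ ccwDist p r)
    (hrs : ccwDist p r ≤ ccwDist p s) : ccwDist q r ≤ ccwDist q s := by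
  rw [ccwDist_eq_sub_of_le hqr, ccwDist_eq_sub_of_le (hqr.trans hrs)]
  linarith

theorem ccwDist_le_or_ccwDist_le (p q r : 𝕋) :
    ccwDist p q ≤ ccwDist p r ∨ ccwDist q p ≤ ccwDist q r := by
  refine or_iff_not_imp_left.2 fun hlt => ?_
  rw [not_le] at hlt
  obtain ⟨hq₀, hq₁⟩ := ccwDist_mem_Ico p q
  obtain ⟨hr₀, hr₁⟩ := ccwDist_mem_Ico p r
  have hqp : ccwDist q p = 1 - ccwDist p q := by
    refine ccwDist_eq_of_coe_eq ⟨by linarith, by linarith⟩ ?_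
    rw [AddCircle.coe_sub, AddCircle.coe_period, coe_ccwDist]
    abel
  have hqr : ccwDist q r = ccwDist p r - ccwDist p q + 1 := by
    refine ccwDist_eq_of_coe_eq ⟨by linarith, by linarith⟩ ?_
    rw [AddCircle.coe_add, AddCircle.coe_sub, AddCircle.coe_period, coe_ccwDist, coe_ccwDist]
    abel
  rw [hqp, hqr]
  linarith

def arc (a b : ℝ) : Set 𝕋 := (fun x : ℝ => (x : 𝕋)) '' Set.Icc a b

/-- When `b - a < 1`, this says that the counterclockwise arc from `p` to `q` lies in `arc a b`. -/
def CcwSubarc (a b : ℝ) (p q : 𝕋) : Prop :=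
  ∃ t s : ℝ, a ≤ t ∧ t ≤ s ∧ s ≤ b ∧ (t : 𝕋) = p ∧ (s : 𝕋) = q

theorem neg_mem_arc_neg {a b : ℝ} {p : 𝕋} (hp : p ∈ arc a b) : -p ∈ arc (-b) (-a) := by
  obtain ⟨t, ⟨hat, htb⟩, rfl⟩ := hp
  exact ⟨-t, ⟨neg_le_neg htb, neg_le_neg hat⟩, AddCircle.coe_neg 1⟩

theorem neg_mem_arc_neg_iff {a b : ℝ} {p : 𝕋} : -p ∈ arc (-b) (-a) ↔ p ∈ arc a b :=
  ⟨fun h => by simpa using neg_mem_arc_neg h, neg_mem_arc_neg⟩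

theorem ccwSubarc_or_ccwSubarc {a b : ℝ} {p q : 𝕋} (hp : p ∈ arc a b) (hq : q ∈ arc a b) :
    CcwSubarc a b p q ∨ CcwSubarc a b q p := by
  obtain ⟨t, ⟨hat, htb⟩, rfl⟩ := hp
  obtain ⟨s, ⟨has, hsb⟩, rfl⟩ := hq
  rcases le_total t s with hts | hst
  · exact Or.inl ⟨t, s, hat, hts, hsb, rfl, rfl⟩
  · exact Or.inr ⟨s, t, has, hst, htb, rfl, rfl⟩

namespace CcwSubarc

variable {a b : ℝ} {p q : 𝕋}

theorem neg (h : CcwSubarc a b p q) : CcwSubarc (-b) (-a) (-q) (-p) := by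
  obtain ⟨t, s, hat, hts, hsb, rfl, rfl⟩ := h
  exact ⟨-s, -t, neg_le_neg hsb, neg_le_neg hts, neg_le_neg hat, AddCircle.coe_neg 1,
    AddCircle.coe_neg 1⟩

theorem mem_of_ccwDist_le (hab : b - a < 1) (h : CcwSubarc a b p q) {r : 𝕋}
    (hr : ccwDist p r ≤ ccwDist p q) : r ∈ arc a b := by
  obtain ⟨t, s, hat, hts, hsb, rfl, rfl⟩ := h
  have hpq : ccwDist t s = s - t :=
    ccwDist_eq_of_coe_eq ⟨by linarith, by linarith⟩ (AddCircle.coe_sub 1 s t)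
  refine ⟨t + ccwDist t r, ⟨by linarith [(ccwDist_mem_Ico t r).1], by linarith⟩, ?_⟩
  dsimp only
  rw [AddCircle.coe_add 1, coe_ccwDist]
  abel

end CcwSubarc

theorem SimpleGraph.isClique_of_forall_le {α : Type*} [LinearOrder α] {G : SimpleGraph V}
    {s : Set V} (g : V → α) (h : ∀ y ∈ s, ∀ z ∈ s, y ≠ z → g y ≤ g z → G.Adj y z) :
    G.IsClique s := by
  intro y hy z hz hne
  rcases le_total (g y) (g z) with hyz | hzy
  · exact h y hy z hz hne hyz
  · exact (h z hz y hy hne.symm hzy).symm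

theorem SimpleGraph.ncard_add_one_le_cliqueNum [Finite V] {G : SimpleGraph V} {s : Set V} {x : V}
    (hx : x ∉ s) (h : G.IsClique (insert x s)) : s.ncard + 1 ≤ G.cliqueNum := by
  have hfin := (insert x s).toFinite
  rw [← Set.ncard_insert_of_notMem hx s.toFinite, Set.ncard_eq_toFinset_card _ hfin]
  exact IsClique.card_le_cliqueNum (tc := by rwa [Set.Finite.coe_toFinset])

variable {k : ℕ}

structure IsCircularIntervalRep (G : SimpleGraph V) (f : V → 𝕋) (a b : Fin k → ℝ) : Prop where
  length_lt : ∀ i, b i - a i < 1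
  adj_iff : ∀ u w, G.Adj u w ↔ u ≠ w ∧ ∃ i, f u ∈ arc (a i) (b i) ∧ f w ∈ arc (a i) (b i)

def CcwStep (f : V → 𝕋) (a b : Fin k → ℝ) (u w : V) : Prop :=
  ∃ i, CcwSubarc (a i) (b i) (f u) (f w)

theorem CcwStep.neg {f : V → 𝕋} {a b : Fin k → ℝ} {u w : V} (h : CcwStep f a b u w) :
    CcwStep (-f) (-b) (-a) w u :=
  let ⟨i, hi⟩ := h
  ⟨i, hi.neg⟩

def ccwNbhd (f : V → 𝕋) (a b : Fin k → ℝ) (v : V) : Set V :=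
  {x | x ≠ v ∧ CcwStep f a b v x}

def ccwSecondNbhd (G : SimpleGraph V) (f : V → 𝕋) (a b : Fin k → ℝ) (v : V) : Set V :=
  {w | w ≠ v ∧ ¬G.Adj v w ∧ ∃ x ∈ ccwNbhd f a b v, CcwStep f a b x w}

namespace IsCircularIntervalRep

variable {G : SimpleGraph V} {f : V → 𝕋} {a b : Fin k → ℝ}

theorem neg (hG : IsCircularIntervalRep G f a b) : IsCircularIntervalRep G (-f) (-b) (-a) where
  length_lt i := by simpa only [Pi.neg_apply, neg_sub_neg] using hG.length_lt i
  adj_iff u w := by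
    simp only [hG.adj_iff u w, Pi.neg_apply, neg_mem_arc_neg_iff]

theorem ccwStep_or_ccwStep (hG : IsCircularIntervalRep G f a b) {u w : V} (h : G.Adj u w) :
    CcwStep f a b u w ∨ CcwStep f a b w u := by
  obtain ⟨-, i, hu, hw⟩ := (hG.adj_iff u w).1 h
  exact (ccwSubarc_or_ccwSubarc hu hw).imp (⟨i, ·⟩) (⟨i, ·⟩)

theorem adj_of_ccwDist_le (hG : IsCircularIntervalRep G f a b) {u w x y : V}
    (h : CcwStep f a b u w) (hx : ccwDist (f u) (f x) ≤ ccwDist (f u) (f w))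
    (hy : ccwDist (f u) (f y) ≤ ccwDist (f u) (f w)) (hne : x ≠ y) : G.Adj x y := by
  obtain ⟨i, hi⟩ := h
  exact (hG.adj_iff x y).2 ⟨hne, i, hi.mem_of_ccwDist_le (hG.length_lt i) hx,
    hi.mem_of_ccwDist_le (hG.length_lt i) hy⟩

theorem adj_of_ccwStep (hG : IsCircularIntervalRep G f a b) {u w : V} (h : CcwStep f a b u w)
    (hne : u ≠ w) : G.Adj u w :=
  hG.adj_of_ccwDist_le h (ccwDist_self_le _ _) le_rfl hne

theorem adj_of_ccwStep_of_ccwStep (hG : IsCircularIntervalRep G f a b) {u v x : V}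
    (hv : CcwStep f a b v x) (hu : CcwStep f a b u x) (hne : v ≠ u) : G.Adj v u := by
  rcases ccwDist_le_or_ccwDist_le (f v) (f u) (f x) with h | h
  · exact hG.adj_of_ccwDist_le hv (ccwDist_self_le _ _) h hne
  · exact (hG.adj_of_ccwDist_le hu (ccwDist_self_le _ _) h hne.symm).symm

theorem neighborSet_square_subset (hG : IsCircularIntervalRep G f a b) (v : V) :
    (square G).neighborSet v ⊆ ccwNbhd f a b v ∪ ccwNbhd (-f) (-b) (-a) v ∪
      ccwSecondNbhd G f a b v ∪ ccwSecondNbhd G (-f) (-b) (-a) v := by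
  rintro u ⟨hvu, hdist⟩
  by_cases huv : G.Adj v u
  · rcases hG.ccwStep_or_ccwStep huv with h | h
    · exact Or.inl (Or.inl (Or.inl ⟨hvu.symm, h⟩))
    · exact Or.inl (Or.inl (Or.inr ⟨hvu.symm, h.neg⟩))
  obtain ⟨x, hvx, hxu⟩ := hdist.resolve_left huv
  have hx : x ≠ v := hvx.ne'
  rcases hG.ccwStep_or_ccwStep hvx with hvx | hxv <;>
    rcases hG.ccwStep_or_ccwStep hxu with hxu | hux
  · exact Or.inl (Or.inr ⟨hvu.symm, huv, x, ⟨hx, hvx⟩, hxu⟩)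
  · exact absurd (hG.adj_of_ccwStep_of_ccwStep hvx hux hvu) huv
  · exact absurd (hG.neg.adj_of_ccwStep_of_ccwStep hxv.neg hxu.neg hvu) huv
  · exact Or.inr ⟨hvu.symm, huv, x, ⟨hx, hxv.neg⟩, hux.neg⟩

theorem isClique_insert_ccwNbhd (hG : IsCircularIntervalRep G f a b) (v : V) :
    G.IsClique (insert v (ccwNbhd f a b v)) := by
  refine isClique_of_forall_le (fun x => ccwDist (f v) (f x)) ?_
  rintro y hy z (rfl | hz) hne hyz
  · obtain rfl | hy := hy
    · exact absurd rfl hne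
    · exact (hG.adj_of_ccwStep hy.2 hne.symm).symm
  · exact hG.adj_of_ccwDist_le hz.2 hyz le_rfl hne

theorem ccwDist_lt_of_mem_ccwSecondNbhd (hG : IsCircularIntervalRep G f a b) {v w x : V}
    (hw : w ∈ ccwSecondNbhd G f a b v) (hx : x ∈ ccwNbhd f a b v) :
    ccwDist (f v) (f x) < ccwDist (f v) (f w) :=
  lt_of_not_ge fun h => hw.2.1 (hG.adj_of_ccwDist_le hx.2 (ccwDist_self_le _ _) h hw.1.symm)

theorem adj_of_mem_ccwSecondNbhd (hG : IsCircularIntervalRep G f a b) {v w y : V}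
    (hw : w ∈ ccwSecondNbhd G f a b v)
    (hy : ∀ x ∈ ccwNbhd f a b v, ccwDist (f v) (f x) ≤ ccwDist (f v) (f y))
    (hyw : ccwDist (f v) (f y) ≤ ccwDist (f v) (f w)) (hne : y ≠ w) : G.Adj y w := by
  obtain ⟨-, -, x, hx, hxw⟩ := hw
  exact hG.adj_of_ccwDist_le hxw (ccwDist_le_ccwDist_of_le_of_le (hy x hx) hyw) le_rfl hne

theorem isClique_insert_ccwSecondNbhd (hG : IsCircularIntervalRep G f a b) {v x₀ : V}
    (hx₀ : x₀ ∈ ccwNbhd f a b v)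
    (hmax : ∀ x ∈ ccwNbhd f a b v, ccwDist (f v) (f x) ≤ ccwDist (f v) (f x₀)) :
    G.IsClique (insert x₀ (ccwSecondNbhd G f a b v)) := by
  have hbeyond : ∀ y ∈ insert x₀ (ccwSecondNbhd G f a b v), ∀ x ∈ ccwNbhd f a b v,
      ccwDist (f v) (f x) ≤ ccwDist (f v) (f y) := by
    rintro y (rfl | hy) x hx
    exacts [hmax x hx, (hG.ccwDist_lt_of_mem_ccwSecondNbhd hy hx).le]
  refine isClique_of_forall_le (fun x => ccwDist (f v) (f x)) ?_
  rintro y hy z (rfl | hz) hne hyz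
  · obtain rfl | hy := hy
    · exact absurd rfl hne
    · exact absurd hyz (hG.ccwDist_lt_of_mem_ccwSecondNbhd hy hx₀).not_ge
  · exact hG.adj_of_mem_ccwSecondNbhd hz (hbeyond y hy) hyz hne

theorem ncard_ccwNbhd_add_one_le [Finite V] (hG : IsCircularIntervalRep G f a b) (v : V) :
    (ccwNbhd f a b v).ncard + 1 ≤ G.cliqueNum :=
  ncard_add_one_le_cliqueNum (fun h => h.1 rfl) (hG.isClique_insert_ccwNbhd v)

theorem ncard_ccwSecondNbhd_add_one_le [Finite V] (hG : IsCircularIntervalRep G f a b) (v : V) :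
    (ccwSecondNbhd G f a b v).ncard + 1 ≤ G.cliqueNum := by
  rcases (ccwNbhd f a b v).eq_empty_or_nonempty with hR | hR
  · have hS : ccwSecondNbhd G f a b v = ∅ :=
      Set.eq_empty_of_forall_notMem fun w ⟨_, _, x, hx, _⟩ => hR.subset hx
    exact ncard_add_one_le_cliqueNum (x := v) (by simp [hS]) (by simp [hS])
  · obtain ⟨x₀, hx₀, hmax⟩ :=
      Set.exists_max_image _ (fun x => ccwDist (f v) (f x)) (Set.toFinite _) hR
    exact ncard_add_one_le_cliqueNum (fun h => (hG.ccwDist_lt_of_mem_ccwSecondNbhd h hx₀).false)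
      (hG.isClique_insert_ccwSecondNbhd hx₀ hmax)

end IsCircularIntervalRep

theorem stmt_9_general [Fintype V] (G : SimpleGraph V) (k : ℕ)
    (f : V → AddCircle (1 : ℝ))
    (a b : Fin k → ℝ) (hlen : ∀ i, b i - a i < 1)
    (hadj : ∀ u w : V, G.Adj u w ↔ u ≠ w ∧ ∃ i : Fin k,
      f u ∈ (fun x : ℝ => (x : AddCircle (1 : ℝ))) '' Set.Icc (a i) (b i) ∧
      f w ∈ (fun x : ℝ => (x : AddCircle (1 : ℝ))) '' Set.Icc (a i) (b i)) :
    ∀ v : V, sqDeg G v ≤ 4 * G.cliqueNum - 4 := by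
  intro v
  have hG : IsCircularIntervalRep G f a b := ⟨hlen, hadj⟩
  have h₁ := hG.ncard_ccwNbhd_add_one_le v
  have h₂ := hG.neg.ncard_ccwNbhd_add_one_le v
  have h₃ := hG.ncard_ccwSecondNbhd_add_one_le v
  have h₄ := hG.neg.ncard_ccwSecondNbhd_add_one_le v
  calc sqDeg G v
      ≤ (ccwNbhd f a b v ∪ ccwNbhd (-f) (-b) (-a) v ∪
          ccwSecondNbhd G f a b v ∪ ccwSecondNbhd G (-f) (-b) (-a) v).ncard :=
        Set.ncard_le_ncard (hG.neighborSet_square_subset v)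
    _ ≤ (ccwNbhd f a b v).ncard + (ccwNbhd (-f) (-b) (-a) v).ncard +
          (ccwSecondNbhd G f a b v).ncard + (ccwSecondNbhd G (-f) (-b) (-a) v).ncard :=
        (Set.ncard_union_le _ _).trans <| Nat.add_le_add_right ((Set.ncard_union_le _ _).trans <|
          Nat.add_le_add_right (Set.ncard_union_le _ _) _) _
    _ ≤ 4 * G.cliqueNum - 4 := by omega

theorem stmt_9 [Fintype V] (G : SimpleGraph V) (k : ℕ)
    (f : V → AddCircle (1 : ℝ)) (hf : Function.Injective f)
    (a b : Fin k → ℝ) (hab : ∀ i, a i ≤ b i) (hlen : ∀ i, b i - a i < 1)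
    (hadj : ∀ u w : V, G.Adj u w ↔ u ≠ w ∧ ∃ i : Fin k,
      f u ∈ (fun x : ℝ => (x : AddCircle (1 : ℝ))) '' Set.Icc (a i) (b i) ∧
      f w ∈ (fun x : ℝ => (x : AddCircle (1 : ℝ))) '' Set.Icc (a i) (b i)) :
    ∀ v : V, sqDeg G v ≤ 4 * G.cliqueNum - 4 :=
  stmt_9_general G k f a b hlen hadj
end

section
/- Let (G, a, b) be a linear interval strip. Then for any vertex v adjacent to a in G, the degree of v in the square of G satisfies deg_{G²}(v) ≤ 3ω(G) − 3. -/
open SimpleGraph Finset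

variable {V : Type*}

/-!
Intervals give the umbrella property of the order: if `u ~ w`, every vertex lying between them is
adjacent to both. Hence the left neighbours of `v`, and likewise the right ones, form a clique
together with `v`, so `v` has at most `2(ω - 1)` neighbours. As `v` is adjacent to the leftmost
vertex `a`, every vertex left of `v` is a neighbour, so all second neighbours lie right of `v`.
If `w` is the rightmost second neighbour and `x` a common neighbour of `v` and `w`, then all second
neighbours lie between `x` and `w`, so with `x` they form a clique: there are at most `ω - 1` of
them.
-/

variable {α : Type*} [LinearOrder α]

def HasUmbrellaProperty (G : SimpleGraph V) (f : V → α) : Prop :=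
  ∀ ⦃u x w : V⦄, G.Adj u w → f u ≤ f x → f x ≤ f w →
    (x ≠ u → G.Adj u x) ∧ (x ≠ w → G.Adj x w)

lemma hasUmbrellaProperty_of_ordConnected {ι : Type*} {G : SimpleGraph V} {f : V → α}
    {F : ι → Set α} (hF : ∀ i, (F i).OrdConnected)
    (hadj : ∀ u w, G.Adj u w ↔ u ≠ w ∧ ∃ i, f u ∈ F i ∧ f w ∈ F i) :
    HasUmbrellaProperty G f := by
  intro u x w huw hux hxw
  obtain ⟨-, i, hu, hw⟩ := (hadj u w).1 huw
  have hx : f x ∈ F i := (hF i).out hu hw ⟨hux, hxw⟩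
  exact ⟨fun h => (hadj u x).2 ⟨h.symm, i, hu, hx⟩, fun h => (hadj x w).2 ⟨h, i, hx, hw⟩⟩

lemma ncard_le_cliqueNum_sub_one [Finite V] {G : SimpleGraph V} {s : Set V} {z : V}
    (h : G.IsClique (insert z s)) (hz : z ∉ s) : s.ncard ≤ G.cliqueNum - 1 := by
  have hfin := (insert z s).toFinite
  have hcard := (show G.IsClique (hfin.toFinset : Set V) by simpa using h).card_le_cliqueNum
  rw [← Set.ncard_eq_toFinset_card _ hfin, Set.ncard_insert_of_notMem hz] at hcard
  omega

lemma square_neighborSet (G : SimpleGraph V) (v : V) :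
    (square G).neighborSet v = G.neighborSet v ∪ secondNbhd G v := by
  ext w
  simp only [mem_neighborSet, square, secondNbhd, Set.mem_union, Set.mem_ofPred_eq]
  by_cases hvw : G.Adj v w
  · simp [hvw, hvw.ne]
  · simp [hvw, ne_comm]

lemma sqDeg_le_ncard_neighborSet_add_ncard_secondNbhd [Finite V] (G : SimpleGraph V) (v : V) :
    sqDeg G v ≤ (G.neighborSet v).ncard + (secondNbhd G v).ncard := by
  rw [sqDeg, square_neighborSet]
  exact Set.ncard_union_le _ _

namespace HasUmbrellaProperty

variable {G : SimpleGraph V} {f : V → α}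

lemma dual (h : HasUmbrellaProperty G f) : HasUmbrellaProperty G (OrderDual.toDual ∘ f) := by
  intro u x w huw hux hxw
  have := h huw.symm hxw hux
  exact ⟨fun hu => (this.2 hu).symm, fun hw => (this.1 hw).symm⟩

lemma isClique_insert_of_le (h : HasUmbrellaProperty G f) {s : Set V} {z : V}
    (hadj : ∀ u ∈ s, G.Adj z u) (hle : ∀ u ∈ s, f z ≤ f u) : G.IsClique (insert z s) := by
  refine IsClique.insert ?_ fun u hu _ => hadj u hu
  intro p hp q hq hpq
  rcases le_total (f p) (f q) with hfpq | hfqp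
  · exact (h (hadj q hq) (hle p hp) hfpq).2 hpq
  · exact ((h (hadj p hp) (hle q hq) hfqp).2 hpq.symm).symm

lemma isClique_insert_of_ge (h : HasUmbrellaProperty G f) {s : Set V} {z : V}
    (hadj : ∀ u ∈ s, G.Adj z u) (hge : ∀ u ∈ s, f u ≤ f z) : G.IsClique (insert z s) :=
  h.dual.isClique_insert_of_le hadj hge

lemma ncard_neighborSet_le [Finite V] (h : HasUmbrellaProperty G f) (v : V) :
    (G.neighborSet v).ncard ≤ 2 * (G.cliqueNum - 1) := by
  set L := {u ∈ G.neighborSet v | f u ≤ f v}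
  set R := {u ∈ G.neighborSet v | f v ≤ f u}
  have hL : L.ncard ≤ G.cliqueNum - 1 := ncard_le_cliqueNum_sub_one
    (h.isClique_insert_of_ge (fun _ hu => hu.1) fun _ hu => hu.2) fun hv => G.irrefl hv.1
  have hR : R.ncard ≤ G.cliqueNum - 1 := ncard_le_cliqueNum_sub_one
    (h.isClique_insert_of_le (fun _ hu => hu.1) fun _ hu => hu.2) fun hv => G.irrefl hv.1
  have hcover : G.neighborSet v ⊆ L ∪ R := fun u hu =>
    (le_total (f u) (f v)).imp (fun hle => ⟨hu, hle⟩) fun hge => ⟨hu, hge⟩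
  calc (G.neighborSet v).ncard ≤ (L ∪ R).ncard := Set.ncard_le_ncard hcover
    _ ≤ L.ncard + R.ncard := Set.ncard_union_le _ _
    _ ≤ 2 * (G.cliqueNum - 1) := by omega

section LeftmostNeighbour

variable (h : HasUmbrellaProperty G f) {va v : V} (hmin : ∀ u, f va ≤ f u) (hav : G.Adj va v)
include h hmin hav

lemma adj_of_le {u : V} (hne : u ≠ v) (hle : f u ≤ f v) : G.Adj v u :=
  ((h hav (hmin u) hle).2 hne).symm

lemma lt_of_mem_secondNbhd {u : V} (hu : u ∈ secondNbhd G v) : f v < f u :=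
  lt_of_not_ge fun hle => hu.2.1 (h.adj_of_le hmin hav hu.1 hle)

lemma ncard_secondNbhd_le [Finite V] : (secondNbhd G v).ncard ≤ G.cliqueNum - 1 := by
  rcases (secondNbhd G v).eq_empty_or_nonempty with hempty | hne
  · simp [hempty]
  obtain ⟨w, hw, hwmax⟩ := Set.exists_max_image _ f (Set.toFinite _) hne
  obtain ⟨x, hvx, hxw⟩ := hw.2.2
  have hx : x ∉ secondNbhd G v := fun hx => hx.2.1 hvx
  have hxle : ∀ u ∈ secondNbhd G v, f x ≤ f u := fun u hu => le_of_not_gt fun hlt =>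
    hu.2.1 ((h hvx (h.lt_of_mem_secondNbhd hmin hav hu).le hlt.le).1 hu.1)
  have hxadj : ∀ u ∈ secondNbhd G v, G.Adj x u := fun u hu =>
    (h hxw (hxle u hu) (hwmax u hu)).1 (ne_of_mem_of_not_mem hu hx)
  exact ncard_le_cliqueNum_sub_one (h.isClique_insert_of_le hxadj hxle) hx

end LeftmostNeighbour

end HasUmbrellaProperty

theorem stmt_10_general [Fintype V] (G : SimpleGraph V) (k : ℕ)
    (f : V → ℝ)
    (F : Fin k → Set ℝ) (a' b' : Fin k → ℝ) (hF : ∀ i, F i = Set.Icc (a' i) (b' i))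
    (hadj : ∀ u w : V, G.Adj u w ↔ u ≠ w ∧ ∃ i : Fin k, f u ∈ F i ∧ f w ∈ F i)
    (va : V) (hmin : ∀ u : V, f va ≤ f u) :
    ∀ v : V, G.Adj va v → sqDeg G v ≤ 3 * G.cliqueNum - 3 := by
  intro v hav
  have hG : HasUmbrellaProperty G f :=
    hasUmbrellaProperty_of_ordConnected (fun i => hF i ▸ Set.ordConnected_Icc) hadj
  calc sqDeg G v ≤ (G.neighborSet v).ncard + (secondNbhd G v).ncard :=
        sqDeg_le_ncard_neighborSet_add_ncard_secondNbhd G v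
    _ ≤ 2 * (G.cliqueNum - 1) + (G.cliqueNum - 1) :=
        add_le_add (hG.ncard_neighborSet_le v) (hG.ncard_secondNbhd_le hmin hav)
    _ = 3 * G.cliqueNum - 3 := by omega

theorem stmt_10 [Fintype V] (G : SimpleGraph V) (k : ℕ)
    (f : V → ℝ) (hf : Function.Injective f)
    (F : Fin k → Set ℝ) (a' b' : Fin k → ℝ) (hF : ∀ i, F i = Set.Icc (a' i) (b' i))
    (hadj : ∀ u w : V, G.Adj u w ↔ u ≠ w ∧ ∃ i : Fin k, f u ∈ F i ∧ f w ∈ F i)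
    (va vb : V) (hmin : ∀ u : V, f va ≤ f u) (hmax : ∀ u : V, f u ≤ f vb) :
    ∀ v : V, G.Adj va v → sqDeg G v ≤ 3 * G.cliqueNum - 3 :=
  stmt_10_general G k f F a' b' hF hadj va hmin
end
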